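/- For every n ≥ 2 and every (x,y) ∈ ℝ² with (x−1−y)(x²−1+y−y²) ≠ 0, the determinants Dₙ(x,y) = det Δₙ(x,y) satisfy the recursion Dₙ(x,y) = (x² − (1+y)²)^{3^{n−2}} · (x²−1+y−y²)^{2·3^{n−2}} · D_{n−1}(F(x,y)), where F(x,y) = (x′,y′) with x′ = x + 2y²(−x² + x + y²)/((x−1−y)(x²−1+y−y²)) and y′ = y²(x−1+y)/((x−1−y)(x²−1+y−y²)). -/

import Mathlib

/-- Generator matrix `aₙ` (size `3ⁿ × 3ⁿ`, indexed by ternary words of length `n`) of the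
level-`n` representation of the Hanoi Towers group: `a₀ = [1]` and
`a_{n+1} = [[0ₙ,1ₙ,0ₙ],[1ₙ,0ₙ,0ₙ],[0ₙ,0ₙ,aₙ]]` in block form. -/
noncomputable def hanoiGenA : (n : ℕ) → Matrix (Fin n → Fin 3) (Fin n → Fin 3) ℝ
  | 0 => 1
  | n + 1 => Matrix.of fun u v =>
      (![![0, 1, 0],
         ![1, 0, 0],
         ![0, 0, hanoiGenA n]] :
        Fin 3 → Fin 3 → Matrix (Fin n → Fin 3) (Fin n → Fin 3) ℝ)
        (u 0) (v 0) (Fin.tail u) (Fin.tail v)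

/-- Generator matrix `bₙ`: `b₀ = [1]`, `b_{n+1} = [[0ₙ,0ₙ,1ₙ],[0ₙ,bₙ,0ₙ],[1ₙ,0ₙ,0ₙ]]`. -/
noncomputable def hanoiGenB : (n : ℕ) → Matrix (Fin n → Fin 3) (Fin n → Fin 3) ℝ
  | 0 => 1
  | n + 1 => Matrix.of fun u v =>
      (![![0, 0, 1],
         ![0, hanoiGenB n, 0],
         ![1, 0, 0]] :
        Fin 3 → Fin 3 → Matrix (Fin n → Fin 3) (Fin n → Fin 3) ℝ)
        (u 0) (v 0) (Fin.tail u) (Fin.tail v)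

/-- Generator matrix `cₙ`: `c₀ = [1]`, `c_{n+1} = [[cₙ,0ₙ,0ₙ],[0ₙ,0ₙ,1ₙ],[0ₙ,1ₙ,0ₙ]]`. -/
noncomputable def hanoiGenC : (n : ℕ) → Matrix (Fin n → Fin 3) (Fin n → Fin 3) ℝ
  | 0 => 1
  | n + 1 => Matrix.of fun u v =>
      (![![hanoiGenC n, 0, 0],
         ![0, 0, 1],
         ![0, 1, 0]] :
        Fin 3 → Fin 3 → Matrix (Fin n → Fin 3) (Fin n → Fin 3) ℝ)
        (u 0) (v 0) (Fin.tail u) (Fin.tail v)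

/-- Auxiliary matrix `dₙ`: `d_{n+1} = [[0ₙ,1ₙ,1ₙ],[1ₙ,0ₙ,1ₙ],[1ₙ,1ₙ,0ₙ]]`. -/
noncomputable def hanoiGenD : (n : ℕ) → Matrix (Fin n → Fin 3) (Fin n → Fin 3) ℝ
  | 0 => 0
  | n + 1 => Matrix.of fun u v =>
      (![![0, 1, 1],
         ![1, 0, 1],
         ![1, 1, 0]] :
        Fin 3 → Fin 3 → Matrix (Fin n → Fin 3) (Fin n → Fin 3) ℝ)
        (u 0) (v 0) (Fin.tail u) (Fin.tail v)

/-- The two-parameter matrix pencil `Δₙ(x,y) = aₙ + bₙ + cₙ - x·I + (y-1)dₙ`. -/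
noncomputable def hanoiDelta (n : ℕ) (x y : ℝ) :
    Matrix (Fin n → Fin 3) (Fin n → Fin 3) ℝ :=
  hanoiGenA n + hanoiGenB n + hanoiGenC n - x • 1 + (y - 1) • hanoiGenD n

/-- `Dₙ(x,y) = det Δₙ(x,y)`. -/
noncomputable def hanoiD (n : ℕ) (x y : ℝ) : ℝ := (hanoiDelta n x y).det

/-- The two-dimensional rational map `F(x,y) = (x', y')`. -/
noncomputable def hanoiMap (p : ℝ × ℝ) : ℝ × ℝ :=
  (p.1 + 2 * p.2 ^ 2 * (-p.1 ^ 2 + p.1 + p.2 ^ 2) /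
      ((p.1 - 1 - p.2) * (p.1 ^ 2 - 1 + p.2 - p.2 ^ 2)),
   p.2 ^ 2 * (p.1 - 1 + p.2) /
      ((p.1 - 1 - p.2) * (p.1 ^ 2 - 1 + p.2 - p.2 ^ 2)))

/-!
Split the ternary words of length `k + 2` by their first two letters. Words beginning with a
repeated letter `ii` span a block `T(x, 0) ⊗ 1 + diag(c_k, b_k, a_k)`, where `T(x, y)` is the
`3 × 3` matrix with `-x` on and `y` off the diagonal; words beginning with one of the six pairs
`ij`, `i ≠ j`, span a block `D ⊗ 1` with a constant `6 × 6` matrix `D`, and the two are coupled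
by `B ⊗ 1` with a constant `3 × 6` matrix `B`. Because all of `B` and `D` live on the top level,
the Schur complement of `D ⊗ 1` is `(T(x, 0) - B D⁻¹ Bᵀ) ⊗ 1 + diag(c_k, b_k, a_k)`, and
`T(x, 0) - B D⁻¹ Bᵀ = T(F(x, y))`: it is `Δ_{k+1}(F(x, y))` up to reindexing. The prefactor is
`det (D ⊗ 1) = (det D)^{3^k}` with `det D = (x² - (1 + y)²)(x² - 1 + y - y²)²`.
-/

namespace Hanoi

open Matrix Kronecker

section Schur

variable {R m n : Type*} [CommRing R] [Fintype m] [Fintype n] [DecidableEq m] [DecidableEq n]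

theorem det_fromBlocks_transpose_of_mul_eq (A : Matrix m m R) (B : Matrix m n R)
    (D : Matrix n n R) (V : Matrix m n R) (hV : V * D = B) (hD : Dᵀ = D) :
    (fromBlocks A B Bᵀ D).det = D.det * (A - B * Vᵀ).det := by
  have hDV : D * Vᵀ = Bᵀ := by rw [← hD, ← transpose_mul, hV]
  have hfactor : fromBlocks A B Bᵀ D =
      fromBlocks 1 V 0 1 * fromBlocks (A - B * Vᵀ) 0 0 D * fromBlocks 1 0 Vᵀ 1 := by
    simp only [fromBlocks_multiply, Matrix.one_mul, Matrix.mul_one, Matrix.zero_mul,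
      Matrix.mul_zero, add_zero, zero_add, hV, hDV, sub_add_cancel]
  rw [hfactor, det_mul, det_mul, det_fromBlocks_zero₂₁, det_fromBlocks_zero₂₁,
    det_fromBlocks_zero₁₂]
  simp only [det_one, mul_one, mul_comm]

end Schur

theorem one_apply_cons_cons {R α : Type*} [Zero R] [One R] [DecidableEq α] {k : ℕ} (i j : α)
    (s t : Fin k → α) :
    (1 : Matrix (Fin (k + 1) → α) (Fin (k + 1) → α) R) (Fin.cons i s) (Fin.cons j t) =
      if i = j then (1 : Matrix (Fin k → α) (Fin k → α) R) s t else 0 := by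
  simp only [one_apply, Fin.cons_inj, ite_and]

/-- `hanoiGen k i` is the one of `c, b, a` whose top-level block fixes the letter `i`. -/
noncomputable def hanoiGen (k : ℕ) : Fin 3 → Matrix (Fin k → Fin 3) (Fin k → Fin 3) ℝ :=
  ![hanoiGenC k, hanoiGenB k, hanoiGenA k]

section Entries

variable (k : ℕ) (i j : Fin 3) (s t : Fin k → Fin 3)

theorem hanoiGen_succ_apply (l : Fin 3) :
    hanoiGen (k + 1) l (Fin.cons i s) (Fin.cons j t) =
      if i = l ∧ j = l then hanoiGen k l s t
      else if i ≠ l ∧ j ≠ l ∧ i ≠ j then (1 : Matrix (Fin k → Fin 3) _ ℝ) s t else 0 := by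
  fin_cases l <;> fin_cases i <;> fin_cases j <;> rfl

theorem hanoiGenD_succ_apply :
    hanoiGenD (k + 1) (Fin.cons i s) (Fin.cons j t) =
      if i = j then 0 else (1 : Matrix (Fin k → Fin 3) (Fin k → Fin 3) ℝ) s t := by
  fin_cases i <;> fin_cases j <;> rfl

end Entries

def topPencil (x y : ℝ) : Matrix (Fin 3) (Fin 3) ℝ := of fun i j => if i = j then -x else y

theorem hanoiDelta_succ_apply (k : ℕ) (x y : ℝ) (i j : Fin 3) (s t : Fin k → Fin 3) :
    hanoiDelta (k + 1) x y (Fin.cons i s) (Fin.cons j t) =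
      topPencil x y i j * (1 : Matrix (Fin k → Fin 3) _ ℝ) s t +
        if i = j then hanoiGen k i s t else 0 := by
  have hA : hanoiGenA (k + 1) = hanoiGen (k + 1) 2 := rfl
  have hB : hanoiGenB (k + 1) = hanoiGen (k + 1) 1 := rfl
  have hC : hanoiGenC (k + 1) = hanoiGen (k + 1) 0 := rfl
  simp only [hanoiDelta, Matrix.add_apply, Matrix.sub_apply, Matrix.smul_apply, smul_eq_mul,
    hA, hB, hC, hanoiGen_succ_apply, hanoiGenD_succ_apply, one_apply_cons_cons, topPencil,
    of_apply]
  fin_cases i <;> fin_cases j <;> simp <;> ring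

noncomputable def hanoiGenDiag (k : ℕ) :
    Matrix (Fin 3 × (Fin k → Fin 3)) (Fin 3 × (Fin k → Fin 3)) ℝ :=
  of fun p q => if p.1 = q.1 then hanoiGen k p.1 p.2 q.2 else 0

theorem hanoiDelta_succ_submatrix (k : ℕ) (x y : ℝ) :
    (hanoiDelta (k + 1) x y).submatrix (Fin.consEquiv _) (Fin.consEquiv _) =
      topPencil x y ⊗ₖ 1 + hanoiGenDiag k := by
  ext ⟨i, s⟩ ⟨j, t⟩
  exact hanoiDelta_succ_apply k x y i j s t

def pairPencil (x y : ℝ) : Matrix (Fin 3 × Fin 3) (Fin 3 × Fin 3) ℝ := of fun p q =>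
  topPencil x y p.1 q.1 * (if p.2 = q.2 then 1 else 0) +
    if p.1 = q.1 ∧ p.2 ≠ p.1 ∧ q.2 ≠ p.1 ∧ p.2 ≠ q.2 then 1 else 0

theorem hanoiDelta_add_two_apply (k : ℕ) (x y : ℝ) (i₁ i₂ j₁ j₂ : Fin 3) (s t : Fin k → Fin 3) :
    hanoiDelta (k + 2) x y (Fin.cons i₁ (Fin.cons i₂ s)) (Fin.cons j₁ (Fin.cons j₂ t)) =
      pairPencil x y (i₁, i₂) (j₁, j₂) * (1 : Matrix (Fin k → Fin 3) _ ℝ) s t +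
        if i₁ = i₂ ∧ j₁ = j₂ ∧ i₁ = j₁ then hanoiGen k i₁ s t else 0 := by
  rw [hanoiDelta_succ_apply, one_apply_cons_cons, hanoiGen_succ_apply]
  simp only [pairPencil, of_apply]
  split_ifs <;> grind

noncomputable def diagOffDiagEquiv : Fin 3 ⊕ Fin 6 ≃ Fin 3 × Fin 3 :=
  Equiv.ofBijective (Sum.elim (fun i => (i, i)) ![(0, 1), (0, 2), (1, 0), (1, 2), (2, 0), (2, 1)])
    (by decide)

theorem diagOffDiagEquiv_inl (i : Fin 3) : diagOffDiagEquiv (.inl i) = (i, i) := rfl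

theorem diagOffDiagEquiv_inr_fst_ne_snd (a : Fin 6) :
    (diagOffDiagEquiv (.inr a)).1 ≠ (diagOffDiagEquiv (.inr a)).2 := by
  revert a; decide

def crossBlock (y : ℝ) : Matrix (Fin 3) (Fin 6) ℝ :=
  !![0, 0, y, 0, y, 0;
     y, 0, 0, 0, 0, y;
     0, y, 0, y, 0, 0]

def offDiagBlock (x y : ℝ) : Matrix (Fin 6) (Fin 6) ℝ :=
  !![-x, 1, 0, 0, 0, y;
     1, -x, 0, y, 0, 0;
     0, 0, -x, 1, y, 0;
     0, y, 1, -x, 0, 0;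
     0, 0, y, 0, -x, 1;
     y, 0, 0, 0, 1, -x]

theorem pairPencil_submatrix (x y : ℝ) :
    (pairPencil x y).submatrix diagOffDiagEquiv diagOffDiagEquiv =
      fromBlocks (topPencil x 0) (crossBlock y) (crossBlock y)ᵀ (offDiagBlock x y) := by
  ext p q
  rcases p with i | i <;> rcases q with j | j <;> fin_cases i <;> fin_cases j <;>
    simp [pairPencil, topPencil, crossBlock, offDiagBlock, diagOffDiagEquiv]

theorem offDiagBlock_transpose (x y : ℝ) : (offDiagBlock x y)ᵀ = offDiagBlock x y := by
  ext i j; fin_cases i <;> fin_cases j <;> rfl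

theorem det_offDiagBlock (x y : ℝ) :
    (offDiagBlock x y).det = (x ^ 2 - (1 + y) ^ 2) * (x ^ 2 - 1 + y - y ^ 2) ^ 2 := by
  simp [offDiagBlock, det_succ_row_zero, Fin.sum_univ_succ, Fin.succAbove]
  ring

/-- `crossBlock y * (offDiagBlock x y)⁻¹` where that inverse exists. The factor `x + 1 + y` of
`det (offDiagBlock x y)` cancels, so only `(x - 1 - y)(x² - 1 + y - y²)` is left in the
denominator. -/
noncomputable def crossQuot (x y : ℝ) : Matrix (Fin 3) (Fin 6) ℝ :=
  ((x - 1 - y) * (x ^ 2 - 1 + y - y ^ 2))⁻¹ •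
    let p := y * (y ^ 2 + x - x ^ 2)
    let q := y * (1 - x)
    !![-y ^ 2, -y ^ 2, p, q, p, q;
       p, q, -y ^ 2, -y ^ 2, q, p;
       q, p, q, p, -y ^ 2, -y ^ 2]

section NonDegenerate

variable {x y : ℝ} (h : (x - 1 - y) * (x ^ 2 - 1 + y - y ^ 2) ≠ 0)
include h

theorem crossQuot_mul_offDiagBlock : crossQuot x y * offDiagBlock x y = crossBlock y := by
  have h₁ := left_ne_zero_of_mul h
  have h₂ := right_ne_zero_of_mul h
  ext i j
  fin_cases i <;> fin_cases j <;>
    simp only [mul_apply, Fin.sum_univ_succ, Fin.sum_univ_zero] <;>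
    simp [crossQuot, offDiagBlock, crossBlock] <;>
    field_simp <;> ring

theorem topPencil_hanoiMap_add_crossBlock_mul :
    topPencil (hanoiMap (x, y)).1 (hanoiMap (x, y)).2 + crossBlock y * (crossQuot x y)ᵀ =
      topPencil x 0 := by
  have h₁ := left_ne_zero_of_mul h
  have h₂ := right_ne_zero_of_mul h
  ext i j
  fin_cases i <;> fin_cases j <;>
    simp only [Matrix.add_apply, mul_apply, transpose_apply, Fin.sum_univ_succ,
      Fin.sum_univ_zero] <;>
    simp [hanoiMap, crossQuot, crossBlock, topPencil] <;>
    field_simp <;> ring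

end NonDegenerate

noncomputable def wordSplit (k : ℕ) :
    (Fin 3 × (Fin k → Fin 3)) ⊕ (Fin 6 × (Fin k → Fin 3)) ≃ (Fin (k + 2) → Fin 3) :=
  (Equiv.sumProdDistrib _ _ _).symm.trans <|
    (diagOffDiagEquiv.prodCongr (Equiv.refl _)).trans <|
      (Equiv.prodAssoc _ _ _).trans <|
        ((Equiv.refl _).prodCongr (Fin.consEquiv fun _ => Fin 3)).trans
          (Fin.consEquiv fun _ => Fin 3)

theorem wordSplit_inl (k : ℕ) (i : Fin 3) (s : Fin k → Fin 3) :
    wordSplit k (.inl (i, s)) = Fin.cons i (Fin.cons i s) := rfl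

theorem wordSplit_inr (k : ℕ) (a : Fin 6) (s : Fin k → Fin 3) :
    wordSplit k (.inr (a, s)) =
      Fin.cons (diagOffDiagEquiv (.inr a)).1 (Fin.cons (diagOffDiagEquiv (.inr a)).2 s) := rfl

theorem hanoiDelta_submatrix_wordSplit (k : ℕ) (x y : ℝ) :
    (hanoiDelta (k + 2) x y).submatrix (wordSplit k) (wordSplit k) =
      fromBlocks (topPencil x 0 ⊗ₖ 1 + hanoiGenDiag k) (crossBlock y ⊗ₖ 1)
        (crossBlock y ⊗ₖ 1)ᵀ (offDiagBlock x y ⊗ₖ 1) := by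
  have hpair := fun a b => congr_fun₂ (pairPencil_submatrix x y) a b
  simp only [Sum.forall, forall_and, submatrix_apply, diagOffDiagEquiv_inl, fromBlocks_apply₁₁,
    fromBlocks_apply₁₂, fromBlocks_apply₂₁, fromBlocks_apply₂₂, transpose_apply] at hpair
  obtain ⟨⟨h₁₁, h₁₂⟩, h₂₁, h₂₂⟩ := hpair
  have hne := diagOffDiagEquiv_inr_fst_ne_snd
  ext (⟨i, s⟩ | ⟨i, s⟩) (⟨j, t⟩ | ⟨j, t⟩) <;>
    simp only [submatrix_apply, wordSplit_inl, wordSplit_inr, hanoiDelta_add_two_apply,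
      fromBlocks_apply₁₁, fromBlocks_apply₁₂, fromBlocks_apply₂₁, fromBlocks_apply₂₂,
      Matrix.add_apply, kroneckerMap_apply, transpose_apply, hanoiGenDiag, of_apply,
      h₁₁, h₁₂, h₂₁, h₂₂]
  all_goals simp [hne, one_apply, eq_comm]

theorem hanoiD_add_two (k : ℕ) {x y : ℝ} (h : (x - 1 - y) * (x ^ 2 - 1 + y - y ^ 2) ≠ 0) :
    hanoiD (k + 2) x y =
      (offDiagBlock x y).det ^ 3 ^ k * hanoiD (k + 1) (hanoiMap (x, y)).1 (hanoiMap (x, y)).2 := by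
  have hV : (crossQuot x y ⊗ₖ (1 : Matrix (Fin k → Fin 3) (Fin k → Fin 3) ℝ)) *
      (offDiagBlock x y ⊗ₖ (1 : Matrix (Fin k → Fin 3) (Fin k → Fin 3) ℝ)) =
        crossBlock y ⊗ₖ 1 := by
    rw [← mul_kronecker_mul, crossQuot_mul_offDiagBlock h, Matrix.one_mul]
  have hD : (offDiagBlock x y ⊗ₖ (1 : Matrix (Fin k → Fin 3) (Fin k → Fin 3) ℝ))ᵀ =
      offDiagBlock x y ⊗ₖ 1 := by
    rw [← kroneckerMap_transpose, offDiagBlock_transpose, transpose_one]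
  have hSchur : topPencil x 0 ⊗ₖ 1 + hanoiGenDiag k -
      (crossBlock y ⊗ₖ (1 : Matrix (Fin k → Fin 3) (Fin k → Fin 3) ℝ)) *
      (crossQuot x y ⊗ₖ (1 : Matrix (Fin k → Fin 3) (Fin k → Fin 3) ℝ))ᵀ =
      (hanoiDelta (k + 1) (hanoiMap (x, y)).1 (hanoiMap (x, y)).2).submatrix
        (Fin.consEquiv _) (Fin.consEquiv _) := by
    rw [hanoiDelta_succ_submatrix, ← kroneckerMap_transpose, transpose_one, ← mul_kronecker_mul,
      Matrix.one_mul, ← topPencil_hanoiMap_add_crossBlock_mul h, add_kronecker]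
    abel
  rw [hanoiD, ← det_submatrix_equiv_self (wordSplit k), hanoiDelta_submatrix_wordSplit,
    det_fromBlocks_transpose_of_mul_eq _ _ _ _ hV hD, hSchur, det_submatrix_equiv_self,
    det_kronecker, det_one, one_pow, mul_one, Fintype.card_fun, Fintype.card_fin,
    Fintype.card_fin, hanoiD]

end Hanoi

theorem hanoiD_recursion (n : ℕ) (hn : 2 ≤ n) (x y : ℝ)
    (h : (x - 1 - y) * (x ^ 2 - 1 + y - y ^ 2) ≠ 0) :
    hanoiD n x y =
      (x ^ 2 - (1 + y) ^ 2) ^ 3 ^ (n - 2) *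
        (x ^ 2 - 1 + y - y ^ 2) ^ (2 * 3 ^ (n - 2)) *
        hanoiD (n - 1) (hanoiMap (x, y)).1 (hanoiMap (x, y)).2 := by
  obtain ⟨k, rfl⟩ : ∃ k, n = k + 2 := ⟨n - 2, by omega⟩
  rw [Nat.add_sub_cancel, Hanoi.hanoiD_add_two k h, Hanoi.det_offDiagBlock, mul_pow, ← pow_mul]
  rfl
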